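/- Fix μ > 0. Let j be a nonnegative integer and suppose ∂_y^j u₀ ∈ L¹(ℝ²). Define M_j(w) := ∫_ℝ ∂_y^j u₀(x,w) dx and, for t > 0, 𝒱_{j,l}(x,y,t) := ∫_ℝ V_l(x, y−w, t) M_j(w) dw. Then for every nonnegative integer l, lim_{t→∞} t^{3/4 + l/2} ‖ (V_l(·,·,t) * ∂_y^j u₀) − 𝒱_{j,l}(·,·,t) ‖_{L^∞(ℝ²)} = 0, where * denotes convolution in (x,y). -/

import Mathlib

open MeasureTheory Filter Complex

noncomputable section

/-- The kernel `U_l = ∂ₓˡ U`, where `U` is the fundamental solution of the linearized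
equation `u_t + u_{xxx} + u_{yyx} - μ u_{xx} = 0`:
`U_l(x,y,t) = (t^{-1/2}/(4π^{3/2})) ∫ (iξ)^l |ξ|^{-1/2} e^{-μtξ²}
  exp(i(tξ³ - y²/(4tξ) + (π/4) sgn ξ + xξ)) dξ`. -/
def kernelU (μ : ℝ) (l : ℕ) (x y t : ℝ) : ℂ :=
  ((t ^ (-(1:ℝ)/2) / (4 * Real.pi ^ ((3:ℝ)/2)) : ℝ) : ℂ) *
    ∫ ξ : ℝ, (Complex.I * (ξ : ℂ)) ^ l *
      ((|ξ| ^ (-(1:ℝ)/2) * Real.exp (-(μ * t) * ξ ^ 2) : ℝ) : ℂ) *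
      Complex.exp (Complex.I *
        ((t * ξ ^ 3 - y ^ 2 / (4 * t * ξ) + (Real.pi / 4) * Real.sign ξ + x * ξ : ℝ) : ℂ))

/-- The kernel `V_l = ∂ₓˡ V`, where `V` is the fundamental solution of
`v_t + v_{yyx} - μ v_{xx} = 0`:
`V_l(x,y,t) = (t^{-1/2}/(4π^{3/2})) ∫ (iξ)^l |ξ|^{-1/2} e^{-μtξ²}
  exp(i(- y²/(4tξ) + (π/4) sgn ξ + xξ)) dξ`. -/
def kernelV (μ : ℝ) (l : ℕ) (x y t : ℝ) : ℂ :=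
  ((t ^ (-(1:ℝ)/2) / (4 * Real.pi ^ ((3:ℝ)/2)) : ℝ) : ℂ) *
    ∫ ξ : ℝ, (Complex.I * (ξ : ℂ)) ^ l *
      ((|ξ| ^ (-(1:ℝ)/2) * Real.exp (-(μ * t) * ξ ^ 2) : ℝ) : ℂ) *
      Complex.exp (Complex.I *
        ((- y ^ 2 / (4 * t * ξ) + (Real.pi / 4) * Real.sign ξ + x * ξ : ℝ) : ℂ))

/-!
The kernel is a Fourier integral whose integrand has modulus `|ξ|^(l - 1/2) e^{-μtξ²}`, so
scaling `ξ ↦ ξ / √t` gives `‖V_l(t)‖_∞ ≲ t^{-3/4 - l/2}`. Moving `x` by `h` multiplies the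
integrand by `e^{ihξ}`, and `|e^{ihξ} - 1| ≤ |h ξ|` costs one more power of `|ξ|`, hence a factor
`t^{-1/2}`: `‖V_l(x + h, y, t) - V_l(x, y, t)‖ ≤ C |h| t^{-5/4 - l/2}`. By Fubini the difference in
the theorem is `∫ (V_l(x - x', y - y', t) - V_l(x, y - y', t)) g(x', y') d(x', y')`, which is
therefore at most `t^{-3/4 - l/2} ∫ min(2C, C' t^{-1/2} |x'|) |g|`, and the last integral tends to
`0` by dominated convergence.
-/

open Set Topology

theorem integrable_abs_rpow_mul_exp_neg_mul_sq {b s : ℝ} (hb : 0 < b) (hs : -1 < s) :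
    Integrable fun x : ℝ => |x| ^ s * Real.exp (-b * x ^ 2) := by
  have hIoi : IntegrableOn (fun x : ℝ => |x| ^ s * Real.exp (-b * x ^ 2)) (Ioi 0) :=
    (integrableOn_rpow_mul_exp_neg_mul_sq hb hs).congr_fun
      (fun x hx => by rw [abs_of_pos hx]) measurableSet_Ioi
  have hIic : IntegrableOn (fun x : ℝ => |x| ^ s * Real.exp (-b * x ^ 2)) (Iic 0) := by
    have hneg : MeasurableEmbedding fun x : ℝ => -x := (Homeomorph.neg ℝ).measurableEmbedding
    rw [← Measure.map_neg_eq_self (volume : Measure ℝ), hneg.integrableOn_map_iff]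
    simpa [Function.comp_def, integrableOn_Ici_iff_integrableOn_Ioi] using hIoi
  rw [← integrableOn_univ, ← Iic_union_Ioi (a := (0 : ℝ))]
  exact hIic.union hIoi

theorem integral_abs_rpow_mul_exp_neg_mul_sq {b s : ℝ} (hb : 0 < b) (hs : -1 < s) :
    ∫ x : ℝ, |x| ^ s * Real.exp (-b * x ^ 2) = b ^ (-(s + 1) / 2) * Real.Gamma ((s + 1) / 2) := by
  have hIoi := integral_rpow_mul_exp_neg_mul_rpow two_pos hs hb
  have heven := integral_comp_abs (f := fun x => x ^ s * Real.exp (-b * x ^ 2))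
  simp only [Real.rpow_two, sq_abs] at hIoi heven
  rw [heven, hIoi]
  ring

theorem Real.measurable_sign : Measurable Real.sign :=
  Measurable.ite measurableSet_Iio measurable_const
    (Measurable.ite measurableSet_Ioi measurable_const measurable_const)

theorem integral_mul_integral_fst_eq {h : ℝ → ℂ} {g : ℝ × ℝ → ℝ}
    (hint : Integrable fun p : ℝ × ℝ => h p.2 * g p) :
    ∫ w, h w * ((∫ x, g (x, w) : ℝ) : ℂ) = ∫ p : ℝ × ℝ, h p.2 * g p := by
  rw [Measure.volume_eq_prod] at hint ⊢
  rw [integral_prod_symm _ hint]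
  refine integral_congr_ae (.of_forall fun w => ?_)
  dsimp only
  rw [integral_const_mul, integral_complex_ofReal]

theorem norm_integral_sub_integral_mul_integral_fst_le {k : ℝ → ℝ → ℂ}
    (hk : Continuous (Function.uncurry k)) {s A L : ℝ} (hs : 0 ≤ s) (hA₀ : 0 ≤ A) (hL₀ : 0 ≤ L)
    (hA : ∀ x y, ‖k x y‖ ≤ s * A) (hL : ∀ x' x y, ‖k x' y - k x y‖ ≤ s * (L * |x' - x|))
    {g : ℝ × ℝ → ℝ} (hg : Integrable g) (q : ℝ × ℝ) :
    ‖(∫ p : ℝ × ℝ, k (q.1 - p.1) (q.2 - p.2) * g p) -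
        ∫ w, k q.1 (q.2 - w) * ((∫ x, g (x, w) : ℝ) : ℂ)‖ ≤
      s * ∫ p : ℝ × ℝ, min (2 * A) (L * |p.1|) * |g p| := by
  have hint₁ : Integrable fun p : ℝ × ℝ => k (q.1 - p.1) (q.2 - p.2) * g p :=
    hg.ofReal.bdd_mul (c := s * A) (by fun_prop) (.of_forall fun p => hA _ _)
  have hint₂ : Integrable fun p : ℝ × ℝ => k q.1 (q.2 - p.2) * g p :=
    hg.ofReal.bdd_mul (c := s * A) (by fun_prop) (.of_forall fun p => hA _ _)
  have hbound : ∀ p : ℝ × ℝ, ‖k (q.1 - p.1) (q.2 - p.2) * g p - k q.1 (q.2 - p.2) * g p‖ ≤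
      s * (min (2 * A) (L * |p.1|) * |g p|) := by
    intro p
    rw [← sub_mul, norm_mul, Complex.norm_real, Real.norm_eq_abs, ← mul_assoc,
      mul_min_of_nonneg _ _ hs]
    gcongr
    refine le_min ((norm_sub_le _ _).trans ?_) ?_
    · linarith [hA (q.1 - p.1) (q.2 - p.2), hA q.1 (q.2 - p.2)]
    · simpa using hL (q.1 - p.1) q.1 (q.2 - p.2)
  have hmin : ∀ p : ℝ × ℝ, ‖min (2 * A) (L * |p.1|)‖ ≤ 2 * A := fun p => by
    rw [Real.norm_of_nonneg (by positivity)]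
    exact min_le_left _ _
  rw [integral_mul_integral_fst_eq hint₂, ← integral_sub hint₁ hint₂, ← integral_const_mul]
  exact norm_integral_le_of_norm_le
    ((hg.abs.bdd_mul (by fun_prop) (.of_forall hmin)).const_mul s) (.of_forall hbound)

theorem tendsto_integral_min_mul_abs {X ι : Type*} [MeasurableSpace X] {ν : Measure X}
    {l : Filter ι} [l.IsCountablyGenerated] {g φ : X → ℝ} (hg : Integrable g ν)
    (hφ : AEStronglyMeasurable φ ν) {c : ℝ} (hc : 0 ≤ c) {ε : ι → ℝ}
    (hε : Tendsto ε l (𝓝 0)) (hε₀ : ∀ᶠ i in l, 0 ≤ ε i) :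
    Tendsto (fun i => ∫ x, min c (ε i * |φ x|) * |g x| ∂ν) l (𝓝 0) := by
  have hlim : ∀ x, Tendsto (fun i => min c (ε i * |φ x|) * |g x|) l (𝓝 0) := fun x => by
    simpa [min_eq_right hc] using
      ((tendsto_const_nhds (x := c)).min (hε.mul_const |φ x|)).mul_const |g x|
  have hbound : ∀ᶠ i in l, ∀ᵐ x ∂ν, ‖min c (ε i * |φ x|) * |g x|‖ ≤ c * |g x| := by
    filter_upwards [hε₀] with i hi
    refine .of_forall fun x => ?_
    rw [norm_mul, Real.norm_of_nonneg (by positivity), Real.norm_of_nonneg (abs_nonneg _)]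
    gcongr
    exact min_le_left _ _
  simpa using tendsto_integral_filter_of_dominated_convergence _
    (.of_forall fun i => (by fun_prop : AEStronglyMeasurable _ ν).mul hg.abs.1) hbound
    (hg.abs.const_mul c) (.of_forall hlim)

theorem ofReal_mul_eLpNorm_top_le {α E : Type*} [MeasurableSpace α] [NormedAddCommGroup E]
    {ν : Measure α} {f : α → E} {a b : ℝ} (ha : 0 ≤ a) (hf : ∀ x, ‖f x‖ ≤ b) :
    ENNReal.ofReal a * eLpNorm f ⊤ ν ≤ ENNReal.ofReal (a * b) := by
  rw [ENNReal.ofReal_mul ha, eLpNorm_exponent_top]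
  gcongr
  exact eLpNormEssSup_le_of_ae_bound (.of_forall hf)

noncomputable section

def kernelVIntegrand (μ : ℝ) (l : ℕ) (x y t ξ : ℝ) : ℂ :=
  (Complex.I * (ξ : ℂ)) ^ l *
      ((|ξ| ^ (-(1:ℝ)/2) * Real.exp (-(μ * t) * ξ ^ 2) : ℝ) : ℂ) *
      Complex.exp (Complex.I *
        ((- y ^ 2 / (4 * t * ξ) + (Real.pi / 4) * Real.sign ξ + x * ξ : ℝ) : ℂ))

-- `∫ |ξ|^s e^{-bξ²} dξ = b^{-(s+1)/2} Γ((s+1)/2)` with `s = l - 1/2` and `b = μ`.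
def kernelVConst (μ : ℝ) (l : ℕ) : ℝ :=
  μ ^ (-((l : ℝ) + 1 / 2) / 2) * Real.Gamma (((l : ℝ) + 1 / 2) / 2) /
    (4 * Real.pi ^ ((3 : ℝ) / 2))

end

theorem kernelV_eq_mul_integral (μ : ℝ) (l : ℕ) (x y t : ℝ) :
    kernelV μ l x y t = ((t ^ (-(1:ℝ)/2) / (4 * Real.pi ^ ((3:ℝ)/2)) : ℝ) : ℂ) *
      ∫ ξ : ℝ, kernelVIntegrand μ l x y t ξ := rfl

theorem kernelVConst_nonneg {μ : ℝ} (hμ : 0 < μ) (l : ℕ) : 0 ≤ kernelVConst μ l := by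
  have := Real.Gamma_pos_of_pos (s := ((l : ℝ) + 1 / 2) / 2) (by positivity)
  unfold kernelVConst
  positivity

section kernelVIntegrand

variable (μ : ℝ) (l : ℕ) (x y t : ℝ)

theorem measurable_kernelVIntegrand : Measurable (kernelVIntegrand μ l x y t) := by
  have := Real.measurable_sign
  unfold kernelVIntegrand
  fun_prop

theorem norm_kernelVIntegrand (ξ : ℝ) :
    ‖kernelVIntegrand μ l x y t ξ‖ = |ξ| ^ ((l : ℝ) - 1 / 2) * Real.exp (-(μ * t) * ξ ^ 2) := by
  have hl : (l : ℝ) + -(1 / 2) ≠ 0 := by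
    have : (2 * l : ℝ) ≠ 1 := by exact_mod_cast (by omega : 2 * l ≠ 1)
    contrapose! this
    linarith
  rw [kernelVIntegrand, norm_mul, norm_mul, Complex.norm_exp_I_mul_ofReal, mul_one, norm_pow,
    norm_mul, Complex.norm_I, one_mul, Complex.norm_real, Complex.norm_real, Real.norm_eq_abs,
    Real.norm_of_nonneg (by positivity), sub_eq_add_neg, Real.rpow_add' (abs_nonneg ξ) hl,
    Real.rpow_natCast, mul_assoc, neg_div]

theorem kernelVIntegrand_succ (ξ : ℝ) :
    kernelVIntegrand μ (l + 1) x y t ξ = Complex.I * ξ * kernelVIntegrand μ l x y t ξ := by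
  simp only [kernelVIntegrand, pow_succ]
  ring

theorem kernelVIntegrand_eq_mul_cexp (x' ξ : ℝ) :
    kernelVIntegrand μ l x' y t ξ =
      kernelVIntegrand μ l x y t ξ * Complex.exp (Complex.I * ((x' - x) * ξ : ℝ)) := by
  simp only [kernelVIntegrand, mul_assoc, ← Complex.exp_add]
  congr 4
  push_cast
  ring

theorem norm_kernelVIntegrand_sub_le (x' ξ : ℝ) :
    ‖kernelVIntegrand μ l x' y t ξ - kernelVIntegrand μ l x y t ξ‖ ≤
      |x' - x| * ‖kernelVIntegrand μ (l + 1) x y t ξ‖ := by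
  rw [kernelVIntegrand_eq_mul_cexp μ l x y t x', ← mul_sub_one, norm_mul, kernelVIntegrand_succ,
    norm_mul, norm_mul, Complex.norm_I, one_mul, Complex.norm_real, Real.norm_eq_abs]
  calc _ ≤ ‖kernelVIntegrand μ l x y t ξ‖ * ‖(x' - x) * ξ‖ := by
        gcongr
        exact Real.norm_exp_I_mul_ofReal_sub_one_le
    _ = _ := by
        rw [Real.norm_eq_abs, abs_mul]
        ring

end kernelVIntegrand

section kernelV

variable {μ t : ℝ} (l : ℕ)

theorem integrable_kernelVIntegrand (hμt : 0 < μ * t) (x y : ℝ) :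
    Integrable (kernelVIntegrand μ l x y t) := by
  refine (integrable_norm_iff (measurable_kernelVIntegrand μ l x y t).aestronglyMeasurable).1 ?_
  simp_rw [norm_kernelVIntegrand]
  exact integrable_abs_rpow_mul_exp_neg_mul_sq hμt (by linarith [l.cast_nonneg (α := ℝ)])

theorem integral_norm_kernelVIntegrand (hμt : 0 < μ * t) (x y : ℝ) :
    ∫ ξ, ‖kernelVIntegrand μ l x y t ξ‖ =
      (μ * t) ^ (-((l : ℝ) + 1 / 2) / 2) * Real.Gamma (((l : ℝ) + 1 / 2) / 2) := by
  simp_rw [norm_kernelVIntegrand]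
  rw [integral_abs_rpow_mul_exp_neg_mul_sq hμt (by linarith [l.cast_nonneg (α := ℝ)])]
  ring_nf

variable (hμ : 0 < μ) (ht : 0 < t)
include hμ ht

theorem prefactor_mul_integral_norm_kernelVIntegrand (x y : ℝ) :
    t ^ (-(1:ℝ)/2) / (4 * Real.pi ^ ((3:ℝ)/2)) * ∫ ξ, ‖kernelVIntegrand μ l x y t ξ‖ =
      t ^ (-((3 : ℝ) / 4 + l / 2)) * kernelVConst μ l := by
  rw [integral_norm_kernelVIntegrand l (mul_pos hμ ht), Real.mul_rpow hμ.le ht.le, kernelVConst,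
    show -((3 : ℝ) / 4 + l / 2) = -(1:ℝ)/2 + -((l : ℝ) + 1 / 2) / 2 by ring, Real.rpow_add ht]
  ring

theorem norm_kernelV_le (x y : ℝ) :
    ‖kernelV μ l x y t‖ ≤ t ^ (-((3 : ℝ) / 4 + l / 2)) * kernelVConst μ l := by
  rw [kernelV_eq_mul_integral, norm_mul, Complex.norm_real, Real.norm_of_nonneg (by positivity),
    ← prefactor_mul_integral_norm_kernelVIntegrand l hμ ht x y]
  gcongr
  exact norm_integral_le_integral_norm _

theorem norm_kernelV_sub_le (x' x y : ℝ) :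
    ‖kernelV μ l x' y t - kernelV μ l x y t‖ ≤
      |x' - x| * (t ^ (-((3 : ℝ) / 4 + ((l + 1 : ℕ) : ℝ) / 2)) * kernelVConst μ (l + 1)) := by
  have hμt := mul_pos hμ ht
  rw [kernelV_eq_mul_integral, kernelV_eq_mul_integral, ← mul_sub,
    ← integral_sub (integrable_kernelVIntegrand l hμt x' y) (integrable_kernelVIntegrand l hμt x y),
    norm_mul, Complex.norm_real, Real.norm_of_nonneg (by positivity),
    ← prefactor_mul_integral_norm_kernelVIntegrand (l + 1) hμ ht x y, mul_left_comm,
    ← integral_const_mul]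
  gcongr
  refine norm_integral_le_of_norm_le ?_ (.of_forall (norm_kernelVIntegrand_sub_le μ l x y t x'))
  exact (integrable_kernelVIntegrand (l + 1) hμt x y).norm.const_mul _

theorem continuous_kernelV : Continuous fun q : ℝ × ℝ => kernelV μ l q.1 q.2 t := by
  simp_rw [kernelV_eq_mul_integral]
  refine continuous_const.mul (continuous_of_dominated
    (fun q => (measurable_kernelVIntegrand μ l q.1 q.2 t).aestronglyMeasurable)
    (fun q => .of_forall fun ξ => by rw [norm_kernelVIntegrand, norm_kernelVIntegrand])
    (integrable_kernelVIntegrand l (mul_pos hμ ht) 0 0).norm ?_)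
  refine .of_forall fun ξ => ?_
  unfold kernelVIntegrand
  fun_prop

end kernelV

/-- `g` stands for `∂_y^j u₀`, and `∫ x, g (x, w)` for `M_j(w)`. -/
theorem kernelV_conv_approximation_general (μ : ℝ) (hμ : 0 < μ) (l : ℕ) :
    ∀ g : ℝ × ℝ → ℝ, Integrable g (volume : Measure (ℝ × ℝ)) →
      Filter.Tendsto
        (fun t : ℝ => ENNReal.ofReal (t ^ ((3 : ℝ)/4 + (l : ℝ)/2)) *
          eLpNorm (fun q : ℝ × ℝ =>
              (∫ p : ℝ × ℝ, kernelV μ l (q.1 - p.1) (q.2 - p.2) t * ((g p : ℝ) : ℂ)) -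
                ∫ w : ℝ, kernelV μ l q.1 (q.2 - w) t * ((∫ x : ℝ, g (x, w) : ℝ) : ℂ)) ⊤
            (volume : Measure (ℝ × ℝ)))
        Filter.atTop (nhds 0) := by
  intro g hg
  have hK := kernelVConst_nonneg hμ l
  have hK' := kernelVConst_nonneg hμ (l + 1)
  have hB : Tendsto (fun t : ℝ => ∫ p : ℝ × ℝ,
      min (2 * kernelVConst μ l) (kernelVConst μ (l + 1) * t ^ (-(1 / 2 : ℝ)) * |p.1|) * |g p|)
      atTop (𝓝 0) :=
    tendsto_integral_min_mul_abs hg measurable_fst.aestronglyMeasurable (by positivity)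
      (by simpa using (tendsto_rpow_neg_atTop one_half_pos).const_mul (kernelVConst μ (l + 1)))
      (by filter_upwards [eventually_gt_atTop 0] with t ht; positivity)
  refine tendsto_of_tendsto_of_tendsto_of_le_of_le' tendsto_const_nhds
    (ENNReal.ofReal_zero ▸ ENNReal.tendsto_ofReal hB) (.of_forall fun _ => zero_le) ?_
  filter_upwards [eventually_gt_atTop 0] with t ht
  have hdecay : t ^ (-((3 : ℝ) / 4 + ((l + 1 : ℕ) : ℝ) / 2)) =
      t ^ (-((3 : ℝ) / 4 + l / 2)) * t ^ (-(1 / 2 : ℝ)) := by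
    rw [← Real.rpow_add ht]
    push_cast
    ring_nf
  refine (ofReal_mul_eLpNorm_top_le (by positivity) fun q =>
    norm_integral_sub_integral_mul_integral_fst_le (k := fun x y => kernelV μ l x y t)
      (s := t ^ (-((3 : ℝ) / 4 + l / 2))) (L := kernelVConst μ (l + 1) * t ^ (-(1 / 2 : ℝ)))
      (continuous_kernelV l hμ ht) (by positivity) hK (by positivity)
      (norm_kernelV_le l hμ ht)
      (fun x' x y => (norm_kernelV_sub_le l hμ ht x' x y).trans_eq (by rw [hdecay]; ring))
      hg q).trans_eq ?_
  rw [← mul_assoc, ← Real.rpow_add ht, add_neg_cancel, Real.rpow_zero, one_mul]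

/-- approximation of the linear solution `V_l(t) * ∂_y^j u₀` by the
`y`-integrated profile `𝒱_{j,l}`.  Since only `g = ∂_y^j u₀ ∈ L¹(ℝ²)` enters, the statement
is quantified over `g`; `M_j(w) = ∫ g(x,w) dx`. -/
theorem kernelV_conv_approximation (μ : ℝ) (hμ : 0 < μ) (j l : ℕ) :
    ∀ g : ℝ × ℝ → ℝ, Integrable g (volume : Measure (ℝ × ℝ)) →
      Filter.Tendsto
        (fun t : ℝ => ENNReal.ofReal (t ^ ((3 : ℝ)/4 + (l : ℝ)/2)) *
          eLpNorm (fun q : ℝ × ℝ =>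
              (∫ p : ℝ × ℝ, kernelV μ l (q.1 - p.1) (q.2 - p.2) t * ((g p : ℝ) : ℂ)) -
                ∫ w : ℝ, kernelV μ l q.1 (q.2 - w) t * ((∫ x : ℝ, g (x, w) : ℝ) : ℂ)) ⊤
            (volume : Measure (ℝ × ℝ)))
        Filter.atTop (nhds 0) :=
  kernelV_conv_approximation_general μ hμ l
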